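/- arXiv:2012.06746 — 4 statements merged into one kernel-verified Lean document; each statement's English description precedes it below -/
import Mathlib

section
/- Let K ≥ 1 be an integer, τ > 0, z, z^F ∈ ℝ^K, and let y ∈ ℝ^K be a one-hot label. Define the smooth labels ỹ = (y + τ·p_τ(z))/(1+τ) and ỹ^F = (y + τ·p_τ(z^F))/(1+τ). Then H(y, p_1(z)) + H(y, p_1(z^F)) + τ²·H(p_τ(z), p_τ(z^F)) + τ²·H(p_τ(z^F), p_τ(z)) = (1+τ)·[ H(ỹ, p_1(z^F)) + H(ỹ^F, p_1(z)) ] + τ·[ R_τ(z) + R_τ(z^F) ]. In other words, the full CKD objective equals, up to the scale factor (1+τ), label smoothing with learned labels plus the sparsity-oriented regularizer with weight τ/(1+τ). -/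
open Real Finset

/-- Tempered softmax: `pτ(z)_k = exp(z_k/τ) / Σ_i exp(z_i/τ)`. -/
noncomputable def softmaxT {K : ℕ} (τ : ℝ) (z : Fin K → ℝ) (k : Fin K) : ℝ :=
  Real.exp (z k / τ) / ∑ i, Real.exp (z i / τ)

/-- Cross entropy `H(a, b) = -Σ_k a_k log b_k`. -/
noncomputable def crossEnt {K : ℕ} (a b : Fin K → ℝ) : ℝ :=
  - ∑ k, a k * Real.log (b k)

/-- Sparsity-oriented regularizer
`R_τ(z) = -log( (Σ_i exp z_i) / (Σ_i exp (z_i/τ))^τ )`. -/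
noncomputable def regR {K : ℕ} (τ : ℝ) (z : Fin K → ℝ) : ℝ :=
  - Real.log ((∑ i, Real.exp (z i)) / (∑ i, Real.exp (z i / τ)) ^ τ)

/-- with one-hot label `y` and smooth labels
`ỹ = (y + τ p_τ(z))/(1+τ)`, `ỹ^F = (y + τ p_τ(z^F))/(1+τ)`,
`H(y,p_1(z)) + H(y,p_1(zF)) + τ² H(p_τ(z),p_τ(zF)) + τ² H(p_τ(zF),p_τ(z))
 = (1+τ)[H(ỹ,p_1(zF)) + H(ỹF,p_1(z))] + τ[R_τ(z) + R_τ(zF)]`. -/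
theorem stmt_2 {K : ℕ} (hK : 1 ≤ K) (τ : ℝ) (hτ : 0 < τ)
    (z zF : Fin K → ℝ) (y : Fin K → ℝ) (k₀ : Fin K)
    (hy : y = fun k => if k = k₀ then (1 : ℝ) else 0) :
    crossEnt y (softmaxT 1 z) + crossEnt y (softmaxT 1 zF)
      + τ ^ 2 * crossEnt (softmaxT τ z) (softmaxT τ zF)
      + τ ^ 2 * crossEnt (softmaxT τ zF) (softmaxT τ z)
    = (1 + τ) *
        (crossEnt (fun k => (y k + τ * softmaxT τ z k) / (1 + τ)) (softmaxT 1 zF)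
          + crossEnt (fun k => (y k + τ * softmaxT τ zF k) / (1 + τ)) (softmaxT 1 z))
      + τ * (regR τ z + regR τ zF) := by
  subst hy
  haveI : Nonempty (Fin K) := Fin.pos_iff_nonempty.mp hK
  have hne : (Finset.univ : Finset (Fin K)).Nonempty := Finset.univ_nonempty
  have hS : ∀ w : Fin K → ℝ, (0:ℝ) < ∑ i, Real.exp (w i) :=
    fun w => Finset.sum_pos (fun i _ => Real.exp_pos _) hne
  have h1τ : (1:ℝ) + τ ≠ 0 := by positivity
  have hτ' : τ ≠ 0 := ne_of_gt hτ
  have hlog : ∀ (σ : ℝ) (w : Fin K → ℝ) (k : Fin K),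
      Real.log (softmaxT σ w k) = w k / σ - Real.log (∑ i, Real.exp (w i / σ)) := by
    intro σ w k
    rw [softmaxT, Real.log_div (Real.exp_ne_zero _) (ne_of_gt (hS _)), Real.log_exp]
  have hsum : ∀ (σ : ℝ) (w : Fin K → ℝ), ∑ k, softmaxT σ w k = 1 := by
    intro σ w
    simp only [softmaxT]
    rw [← Finset.sum_div, div_self (ne_of_gt (hS _))]
  have hCE : ∀ (σ : ℝ) (a w : Fin K → ℝ), crossEnt a (softmaxT σ w)
      = (∑ k, a k) * Real.log (∑ i, Real.exp (w i / σ)) - (∑ k, a k * w k) / σ := by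
    intro σ a w
    simp only [crossEnt, hlog, mul_sub, Finset.sum_sub_distrib, ← Finset.sum_mul,
      ← mul_div_assoc, ← Finset.sum_div]
    ring
  have hreg : ∀ w : Fin K → ℝ, regR τ w
      = τ * Real.log (∑ i, Real.exp (w i / τ)) - Real.log (∑ i, Real.exp (w i)) := by
    intro w
    rw [regR, Real.log_div (ne_of_gt (hS _)) (ne_of_gt (Real.rpow_pos_of_pos (hS _) τ)),
      Real.log_rpow (hS _)]
    ring
  have hy1 : (∑ k, (if k = k₀ then (1:ℝ) else 0)) = 1 := by
    simp [Finset.sum_ite_eq']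
  have hyw : ∀ w : Fin K → ℝ, (∑ k, (if k = k₀ then (1:ℝ) else 0) * w k) = w k₀ := by
    intro w
    simp [ite_mul, Finset.sum_ite_eq']
  have hmixsum : ∀ p : Fin K → ℝ,
      (∑ k, ((if k = k₀ then (1:ℝ) else 0) + τ * p k) / (1 + τ))
        = (1 + τ * ∑ k, p k) / (1 + τ) := by
    intro p
    rw [← Finset.sum_div, Finset.sum_add_distrib, hy1, ← Finset.mul_sum]
  have hmixw : ∀ p w : Fin K → ℝ,
      (∑ k, ((if k = k₀ then (1:ℝ) else 0) + τ * p k) / (1 + τ) * w k)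
        = (w k₀ + τ * ∑ k, p k * w k) / (1 + τ) := by
    intro p w
    simp only [div_mul_eq_mul_div, ← Finset.sum_div, add_mul, Finset.sum_add_distrib,
      hyw, mul_assoc, ← Finset.mul_sum]
  have e1 := hCE 1 (fun k => if k = k₀ then (1:ℝ) else 0) z
  have e2 := hCE 1 (fun k => if k = k₀ then (1:ℝ) else 0) zF
  have e3 := hCE τ (softmaxT τ z) zF
  have e4 := hCE τ (softmaxT τ zF) z
  have e5 := hCE 1 (fun k => ((if k = k₀ then (1:ℝ) else 0) + τ * softmaxT τ z k) / (1 + τ)) zF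
  have e6 := hCE 1 (fun k => ((if k = k₀ then (1:ℝ) else 0) + τ * softmaxT τ zF k) / (1 + τ)) z
  rw [e1, e2, e3, e4, e5, e6, hreg z, hreg zF]
  simp only [div_one, hy1, hyw, hsum, hmixsum, hmixw, one_mul]
  field_simp
  ring
end

section
/- Let K ≥ 1 be an integer, q ∈ ℝ^K a probability vector with q_k > 0 for all k, τ > 0, and z ∈ ℝ^K. Then τ²·D_KL(q ‖ p_τ(z)) = τ·H(q, p_1(z)) + τ·R_τ(z) + τ²·Σ_{k=1}^K q_k · log q_k. Hence, up to the additive term τ²·Σ_k q_k log q_k (constant in z), the tempered KL distillation loss equals a cross entropy against the untempered softmax plus the regularizer. -/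
open Real Finset

/-- Kullback–Leibler divergence `D_KL(p ‖ q) = Σ_k p_k log(p_k / q_k)`. -/
noncomputable def klDiv {K : ℕ} (p q : Fin K → ℝ) : ℝ :=
  ∑ k, p k * Real.log (p k / q k)

/-- for a positive probability vector `q`,
`τ² D_KL(q ‖ p_τ(z)) = τ H(q, p_1(z)) + τ R_τ(z) + τ² Σ_k q_k log q_k`. -/
theorem stmt_3 {K : ℕ} (hK : 1 ≤ K) (τ : ℝ) (hτ : 0 < τ)
    (q : Fin K → ℝ) (hqpos : ∀ k, 0 < q k) (hqsum : ∑ k, q k = 1)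
    (z : Fin K → ℝ) :
    τ ^ 2 * klDiv q (softmaxT τ z)
      = τ * crossEnt q (softmaxT 1 z) + τ * regR τ z
        + τ ^ 2 * ∑ k, q k * Real.log (q k) := by
  have hne : (Finset.univ : Finset (Fin K)).Nonempty := by
    have : Nonempty (Fin K) := ⟨⟨0, hK⟩⟩
    exact Finset.univ_nonempty
  have hSτ : 0 < ∑ i, Real.exp (z i / τ) :=
    Finset.sum_pos (fun i _ => Real.exp_pos _) hne
  have hS1 : 0 < ∑ i, Real.exp (z i) :=
    Finset.sum_pos (fun i _ => Real.exp_pos _) hne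
  have hkl : klDiv q (softmaxT τ z)
      = (∑ k, q k * Real.log (q k)) - (∑ k, q k * z k) / τ
        + Real.log (∑ i, Real.exp (z i / τ)) := by
    rw [klDiv]
    have hterm : ∀ k : Fin K, q k * Real.log (q k / softmaxT τ z k)
        = q k * Real.log (q k) - q k * z k / τ
          + q k * Real.log (∑ i, Real.exp (z i / τ)) := by
      intro k
      rw [softmaxT, Real.log_div (ne_of_gt (hqpos k)) (by positivity),
          Real.log_div (Real.exp_ne_zero _) (ne_of_gt hSτ), Real.log_exp]
      ring
    rw [Finset.sum_congr rfl (fun k _ => hterm k), Finset.sum_add_distrib,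
        Finset.sum_sub_distrib, ← Finset.sum_div, ← Finset.sum_mul, hqsum, one_mul]
  have hce : crossEnt q (softmaxT 1 z)
      = - (∑ k, q k * z k) + Real.log (∑ i, Real.exp (z i)) := by
    rw [crossEnt]
    have hterm : ∀ k : Fin K, q k * Real.log (softmaxT 1 z k)
        = q k * z k - q k * Real.log (∑ i, Real.exp (z i)) := by
      intro k
      rw [softmaxT]
      simp only [div_one]
      rw [Real.log_div (Real.exp_ne_zero _) (ne_of_gt hS1), Real.log_exp]
      ring
    rw [Finset.sum_congr rfl (fun k _ => hterm k), Finset.sum_sub_distrib,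
        ← Finset.sum_mul, hqsum, one_mul]
    ring
  have hreg : regR τ z
      = τ * Real.log (∑ i, Real.exp (z i / τ)) - Real.log (∑ i, Real.exp (z i)) := by
    rw [regR, Real.log_div (ne_of_gt hS1) (by positivity), Real.log_rpow hSτ]
    ring
  rw [hkl, hce, hreg]
  field_simp
  ring
end

section
/- Let K ≥ 1 be an integer, τ ≥ 1, w ∈ ℝ^K, and fix an index k. Let z(t) ∈ ℝ^K be obtained from w by replacing the k-th coordinate with t (i.e., z(t)_k = t and z(t)_l = w_l for l ≠ k). Then lim_{t→∞} R_τ(z(t)) = 0; since R_τ ≥ 0 for τ ≥ 1, the regularizer attains its global minimum 0 in the limit where one logit coordinate tends to +∞. -/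
open Real Finset Filter

/-! Writing `A = Σ_{l ≠ k} exp w_l` and `B = Σ_{l ≠ k} exp (w_l / τ)`, the regularizer along the
ray is `τ (log (exp (t/τ) + B) - t/τ) - (log (exp t + A) - t)`, and `log (exp s + C) - s → 0`
as `s → ∞` because the single growing exponential dominates each log-sum-exp. -/

lemma Finset.sum_comp_update {ι α M : Type*} [Fintype ι] [DecidableEq ι] [AddCommMonoid M]
    (f : α → M) (w : ι → α) (k : ι) (t : α) :
    ∑ i, f (Function.update w k t i) = f t + ∑ i ∈ univ.erase k, f (w i) := by
  rw [← add_sum_erase _ _ (mem_univ k), Function.update_self]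
  congr 1
  exact sum_congr rfl fun i hi => by rw [Function.update_of_ne (ne_of_mem_erase hi)]

lemma tendsto_log_exp_add_sub_atTop (C : ℝ) :
    Tendsto (fun s => log (exp s + C) - s) atTop (nhds 0) := by
  have h_one : Tendsto (fun s => 1 + C * exp (-s)) atTop (nhds 1) := by
    simpa using (tendsto_exp_neg_atTop_nhds_zero.const_mul C).const_add 1
  have h_log : Tendsto (fun s => log (1 + C * exp (-s))) atTop (nhds 0) := by
    simpa [Function.comp_def] using (continuousAt_log one_ne_zero).tendsto.comp h_one
  refine h_log.congr' ?_
  filter_upwards [h_one.eventually_ne one_ne_zero] with s hs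
  have h_factor : exp s + C = exp s * (1 + C * exp (-s)) := by
    rw [exp_neg]
    field_simp
  rw [h_factor, log_mul (exp_ne_zero s) hs, log_exp]
  ring

lemma regR_eq_sub_log_sum_exp {K : ℕ} [NeZero K] (τ : ℝ) (z : Fin K → ℝ) :
    regR τ z = τ * log (∑ i, exp (z i / τ)) - log (∑ i, exp (z i)) := by
  have h_pos : ∀ f : Fin K → ℝ, 0 < ∑ i, exp (f i) := fun f =>
    sum_pos (fun i _ => exp_pos (f i)) univ_nonempty
  rw [regR, log_div (h_pos _).ne' (rpow_pos_of_pos (h_pos _) τ).ne', log_rpow (h_pos _)]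
  ring

theorem stmt_11_general {K : ℕ} (τ : ℝ) (hτ : 1 ≤ τ)
    (w : Fin K → ℝ) (k : Fin K) :
    Tendsto (fun t : ℝ => regR τ (Function.update w k t)) atTop (nhds 0) := by
  have : NeZero K := ⟨k.pos.ne'⟩
  have hτ0 : 0 < τ := one_pos.trans_le hτ
  set A := ∑ i ∈ univ.erase k, exp (w i)
  set B := ∑ i ∈ univ.erase k, exp (w i / τ)
  have h_ray : ∀ t, regR τ (Function.update w k t)
      = τ * (log (exp (t / τ) + B) - t / τ) - (log (exp t + A) - t) := fun t => by
    rw [regR_eq_sub_log_sum_exp, sum_comp_update (fun x => exp (x / τ)),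
      sum_comp_update exp]
    field_simp
    ring
  simp_rw [h_ray]
  simpa using (((tendsto_log_exp_add_sub_atTop B).comp
    (tendsto_id.atTop_div_const hτ0)).const_mul τ).sub (tendsto_log_exp_add_sub_atTop A)

/-- for `τ ≥ 1`, sending the `k`-th logit coordinate to `+∞`
(with the others fixed) sends the regularizer to its global minimum `0`. -/
theorem stmt_11 {K : ℕ} (hK : 1 ≤ K) (τ : ℝ) (hτ : 1 ≤ τ)
    (w : Fin K → ℝ) (k : Fin K) :
    Tendsto (fun t : ℝ => regR τ (Function.update w k t)) atTop (nhds 0) :=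
  stmt_11_general τ hτ w k
end

section
/- Let K ≥ 2 be an integer and z ∈ ℝ^K a fixed vector. Then the regularizer diverges as the temperature grows: R_τ(z) → +∞ as τ → ∞ (i.e., the function τ ↦ R_τ(z) tends to infinity along τ → ∞). -/
open Real Finset Filter

/-! Since `R_τ(z) = τ log (Σ_i exp (z_i/τ)) - log (Σ_i exp z_i)` and the inner sum tends to `K`,
`R_τ(z)` grows like `τ log K`, which diverges exactly when `K ≥ 2`. -/

lemma neg_log_div_rpow {a b : ℝ} (ha : 0 < a) (hb : 0 < b) (τ : ℝ) :
    -log (a / b ^ τ) = τ * log b - log a := by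
  rw [log_div ha.ne' (rpow_pos_of_pos hb τ).ne', log_rpow hb]
  ring

lemma regR_eq_mul_log_sub {K : ℕ} (hK : 0 < K) (τ : ℝ) (z : Fin K → ℝ) :
    regR τ z = τ * log (∑ i, exp (z i / τ)) - log (∑ i, exp (z i)) := by
  have : Nonempty (Fin K) := ⟨⟨0, hK⟩⟩
  exact neg_log_div_rpow (by positivity) (by positivity) τ

lemma tendsto_sum_exp_div_atTop {ι : Type*} [Fintype ι] (z : ι → ℝ) :
    Tendsto (fun τ : ℝ => ∑ i, exp (z i / τ)) atTop (nhds (Fintype.card ι : ℝ)) := by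
  have hexp : ∀ i, Tendsto (fun τ : ℝ => exp (z i / τ)) atTop (nhds 1) := fun i => by
    simpa using ((tendsto_const_nhds (x := z i)).div_atTop tendsto_id).rexp
  simpa using tendsto_finsetSum univ fun i _ => hexp i

/-- for `K ≥ 2` and fixed `z`, the regularizer diverges as the
temperature grows: `R_τ(z) → +∞` as `τ → ∞`. -/
theorem stmt_13 {K : ℕ} (hK : 2 ≤ K) (z : Fin K → ℝ) :
    Tendsto (fun τ : ℝ => regR τ z) atTop atTop := by
  have hlog : Tendsto (fun τ : ℝ => log (∑ i, exp (z i / τ))) atTop (nhds (log K)) := by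
    simpa using (tendsto_sum_exp_div_atTop z).log (by simp; omega)
  have hlogK : 0 < log K := log_pos (by exact_mod_cast hK)
  simp_rw [regR_eq_mul_log_sub (by omega : 0 < K)]
  exact tendsto_atTop_add_const_right _ _ (tendsto_id.atTop_mul_pos hlogK hlog)
end
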